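/- Let P ∈ ℂ[x] be a polynomial of degree n ≥ 1 that is real on the imaginary axis. Let V be a nonzero finite-dimensional ℂ-vector space equipped with commuting left and right 𝒜(P)-module structures making it an 𝒜(P)-bimodule that is simple as a bimodule (its only subbimodules are 0 and V), and suppose V carries a positive definite Hermitian form (·,·) satisfying (eu,v) = −(u,vf), (hu,v) = −(u,vh), (fu,v) = −(u,ve), (ue,v) = −(u,fv), (uh,v) = −(u,hv), (uf,v) = −(u,ev) for all u,v ∈ V. Then dim_ℂ V = 1 and there exists λ ∈ ℂ such that hv = λv and vh = −conj(λ)·v for all v ∈ V, and P(λ + 1) = P(λ − 1) = 0. -/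
import Mathlib


open Polynomial
open scoped Classical

noncomputable section

abbrev FA : Type := FreeAlgebra ℂ (Fin 3)

def Egen : FA := FreeAlgebra.ι ℂ 0
def Fgen : FA := FreeAlgebra.ι ℂ 1
def Hgen : FA := FreeAlgebra.ι ℂ 2

/-- The defining relations of the deformation `𝒜(P)` of the type A Kleinian singularity:
`he − eh = 2e`, `hf − fh = −2f`, `ef = P(h−1)`, `fe = P(h+1)`. -/
inductive ARel (P : ℂ[X]) : FA → FA → Prop
  | he : ARel P (Hgen * Egen - Egen * Hgen) (2 * Egen)
  | hf : ARel P (Hgen * Fgen - Fgen * Hgen) (-(2 * Fgen))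
  | ef : ARel P (Egen * Fgen) (Polynomial.aeval (Hgen - 1) P)
  | fe : ARel P (Fgen * Egen) (Polynomial.aeval (Hgen + 1) P)

/-- The algebra `𝒜(P)`. -/
abbrev AP (P : ℂ[X]) : Type := RingQuot (ARel P)

def eA (P : ℂ[X]) : AP P := RingQuot.mkAlgHom ℂ (ARel P) Egen
def fA (P : ℂ[X]) : AP P := RingQuot.mkAlgHom ℂ (ARel P) Fgen
def hA (P : ℂ[X]) : AP P := RingQuot.mkAlgHom ℂ (ARel P) Hgen

/-- `P` is real on the imaginary axis: `P(it) ∈ ℝ` for all real `t`. -/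
def RealOnIm (P : ℂ[X]) : Prop := ∀ t : ℝ, ∃ r : ℝ, P.eval (Complex.I * t) = r

/-- An invariant Hermitian (sesquilinear) form on the regular bimodule `𝒜(P)`. -/
structure InvForm (P : ℂ[X]) where
  B : AP P → AP P → ℂ
  add_left : ∀ u v w, B (u + v) w = B u w + B v w
  smul_left : ∀ (c : ℂ) (u v), B (c • u) v = c * B u v
  conj_symm : ∀ u v, B u v = starRingEnd ℂ (B v u)
  e_left : ∀ u v, B (eA P * u) v = - B u (v * fA P)
  h_left : ∀ u v, B (hA P * u) v = - B u (v * hA P)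
  f_left : ∀ u v, B (fA P * u) v = - B u (v * eA P)
  e_right : ∀ u v, B (u * eA P) v = - B u (fA P * v)
  h_right : ∀ u v, B (u * hA P) v = - B u (hA P * v)
  f_right : ∀ u v, B (u * fA P) v = - B u (eA P * v)

/-- The regular bimodule `𝒜(P)` is unitarizable: there is a positive definite
invariant Hermitian form on it. -/
def Unitarizable (P : ℂ[X]) : Prop :=
  ∃ Φ : InvForm P, ∀ u : AP P, u ≠ 0 → ∃ r : ℝ, 0 < r ∧ Φ.B u u = r


section AuxLemmas

lemma relHE (P : ℂ[X]) : hA P * eA P = eA P * hA P + 2 * eA P := by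
  have h := RingQuot.mkAlgHom_rel ℂ (ARel.he (P := P))
  simp only [map_sub, map_mul, map_ofNat] at h
  rw [eA, hA]
  linear_combination (norm := noncomm_ring) h

lemma relHF (P : ℂ[X]) : hA P * fA P = fA P * hA P - 2 * fA P := by
  have h := RingQuot.mkAlgHom_rel ℂ (ARel.hf (P := P))
  simp only [map_sub, map_mul, map_ofNat, map_neg] at h
  rw [fA, hA]
  linear_combination (norm := noncomm_ring) h

lemma relEF (P : ℂ[X]) : eA P * fA P = Polynomial.aeval (hA P - 1) P := by
  have h := RingQuot.mkAlgHom_rel ℂ (ARel.ef (P := P))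
  rw [eA, fA, hA, ← map_mul, h, ← Polynomial.aeval_algHom_apply]
  simp

lemma relFE (P : ℂ[X]) : fA P * eA P = Polynomial.aeval (hA P + 1) P := by
  have h := RingQuot.mkAlgHom_rel ℂ (ARel.fe (P := P))
  rw [eA, fA, hA, ← map_mul, h, ← Polynomial.aeval_algHom_apply]
  simp

lemma twoAP (P : ℂ[X]) : (2 : AP P) = algebraMap ℂ (AP P) 2 := (map_ofNat _ 2).symm

end AuxLemmas

/-- a nonzero finite-dimensional simple unitarizable `𝒜(P)`-bimodule (for `P`
real on the imaginary axis) is one-dimensional, with `h` acting by `λ` on the left and by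
`−conj λ` on the right for some common root `λ ± 1` of `P`. Here the right action is encoded
as a module structure over the opposite algebra. -/
theorem stmt10 (P : ℂ[X]) (hdeg : 1 ≤ P.natDegree) (hreal : RealOnIm P)
    (V : Type) [AddCommGroup V] [Module ℂ V]
    [Module (AP P) V] [Module (AP P)ᵐᵒᵖ V]
    [IsScalarTower ℂ (AP P) V] [IsScalarTower ℂ (AP P)ᵐᵒᵖ V]
    [SMulCommClass (AP P) (AP P)ᵐᵒᵖ V]
    [Nontrivial V] [FiniteDimensional ℂ V]
    (hsimple : ∀ W : Submodule ℂ V,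
      (∀ a : AP P, ∀ w ∈ W, a • w ∈ W) →
      (∀ a : AP P, ∀ w ∈ W, MulOpposite.op a • w ∈ W) → W = ⊥ ∨ W = ⊤)
    (B : V → V → ℂ)
    (hadd : ∀ u v w, B (u + v) w = B u w + B v w)
    (hsmul : ∀ (c : ℂ) (u v), B (c • u) v = c * B u v)
    (hconj : ∀ u v, B u v = starRingEnd ℂ (B v u))
    (h1 : ∀ u v, B (eA P • u) v = - B u (MulOpposite.op (fA P) • v))
    (h2 : ∀ u v, B (hA P • u) v = - B u (MulOpposite.op (hA P) • v))
    (h3 : ∀ u v, B (fA P • u) v = - B u (MulOpposite.op (eA P) • v))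
    (h4 : ∀ u v, B (MulOpposite.op (eA P) • u) v = - B u (fA P • v))
    (h5 : ∀ u v, B (MulOpposite.op (hA P) • u) v = - B u (hA P • v))
    (h6 : ∀ u v, B (MulOpposite.op (fA P) • u) v = - B u (eA P • v))
    (hpos : ∀ u : V, u ≠ 0 → ∃ r : ℝ, 0 < r ∧ B u u = r) :
    Module.finrank ℂ V = 1 ∧
    ∃ lam : ℂ,
      (∀ v : V, hA P • v = lam • v ∧
        MulOpposite.op (hA P) • v = (-(starRingEnd ℂ lam)) • v) ∧
      P.eval (lam + 1) = 0 ∧ P.eval (lam - 1) = 0 := by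
  classical
  set L : AP P →ₐ[ℂ] Module.End ℂ V := Algebra.lsmul ℂ ℂ V with hLdef
  set L' : (AP P)ᵐᵒᵖ →ₐ[ℂ] Module.End ℂ V := Algebra.lsmul ℂ ℂ V with hL'def
  set HH : Module.End ℂ V := L (hA P) with hHHdef
  set HH' : Module.End ℂ V := L' (MulOpposite.op (hA P)) with hHH'def
  have two_smul' : ∀ x : V, (2 : AP P) • x = (2 : ℂ) • x := by
    intro x; rw [twoAP, algebraMap_smul]
  have two_smul'' : ∀ x : V, (MulOpposite.op (2 : AP P)) • x = (2 : ℂ) • x := by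
    intro x; rw [twoAP, ← MulOpposite.algebraMap_apply, algebraMap_smul]
  -- choose eigenvalue of HH with maximal real part
  obtain ⟨lam0, hlam0⟩ := Module.End.exists_eigenvalue HH
  obtain ⟨lam, hlamS, hlamMax⟩ := Set.exists_max_image _ Complex.re
    (Module.End.finite_hasEigenvalue HH) ⟨lam0, hlam0⟩
  have hlamS' : HH.HasEigenvalue lam := hlamS
  set U : Submodule ℂ V := Module.End.eigenspace HH lam with hUdef
  have hmemU : ∀ x : V, x ∈ U ↔ hA P • x = lam • x := fun x => Module.End.mem_eigenspace_iff
  -- U is invariant under HH'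
  have hUinv : ∀ x ∈ U, HH' x ∈ U := by
    intro x hx
    rw [hmemU] at hx ⊢
    show hA P • MulOpposite.op (hA P) • x = lam • MulOpposite.op (hA P) • x
    rw [smul_comm (hA P) (MulOpposite.op (hA P)) x, hx, smul_comm]
  obtain ⟨w0, hw0⟩ := hlamS'.exists_hasEigenvector
  haveI : Nontrivial U := ⟨⟨w0, hw0.1⟩, 0, by simpa [Submodule.mk_eq_zero] using hw0.2⟩
  set g : Module.End ℂ U := HH'.restrict hUinv with hgdef
  obtain ⟨mu0, hmu0⟩ := Module.End.exists_eigenvalue g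
  obtain ⟨mu, hmuS, hmuMin⟩ := Set.exists_min_image _ Complex.re
    (Module.End.finite_hasEigenvalue g) ⟨mu0, hmu0⟩
  have hmuS' : g.HasEigenvalue mu := hmuS
  obtain ⟨u, hu⟩ := hmuS'.exists_hasEigenvector
  set v : V := (u : V) with hvdef
  have hv0 : v ≠ 0 := fun h => hu.2 (by simpa [hvdef] using h)
  have hvU : v ∈ U := u.2
  have hHv : hA P • v = lam • v := (hmemU v).mp hvU
  have hH'v : MulOpposite.op (hA P) • v = mu • v := by
    have hgu := Module.End.mem_eigenspace_iff.mp hu.1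
    have h2' := congrArg (Subtype.val) hgu
    rw [hgdef] at h2'
    rw [LinearMap.restrict_coe_apply] at h2'
    exact h2'
  -- e • v = 0 by maximality of Re lam
  have hEv : eA P • v = 0 := by
    by_contra hne
    have heig : hA P • (eA P • v) = (lam + 2) • (eA P • v) := by
      calc hA P • (eA P • v) = (hA P * eA P) • v := (mul_smul _ _ _).symm
        _ = (eA P * hA P) • v + (2 * eA P) • v := by rw [relHE, add_smul]
        _ = eA P • (lam • v) + (2 : ℂ) • (eA P • v) := by
              rw [mul_smul, mul_smul, hHv, two_smul']
        _ = (lam + 2) • (eA P • v) := by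
              rw [smul_comm (eA P) lam v, add_smul]
    have hev2 : HH.HasEigenvalue (lam + 2) :=
      Module.End.hasEigenvalue_of_hasEigenvector
        ⟨Module.End.mem_eigenspace_iff.mpr heig, hne⟩
    have := hlamMax _ hev2
    simp only [Complex.add_re, Complex.re_ofNat] at this
    linarith
  -- op e • v = 0 by minimality of Re mu
  have hE'v : MulOpposite.op (eA P) • v = 0 := by
    by_contra hne
    have hsub : eA P * hA P = hA P * eA P - 2 * eA P := by rw [relHE]; abel
    have hwU : MulOpposite.op (eA P) • v ∈ U := by
      rw [hmemU]
      rw [smul_comm (hA P) (MulOpposite.op (eA P)) v, hHv, smul_comm]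
    have heig' : MulOpposite.op (hA P) • (MulOpposite.op (eA P) • v)
        = (mu - 2) • (MulOpposite.op (eA P) • v) := by
      calc MulOpposite.op (hA P) • (MulOpposite.op (eA P) • v)
          = (MulOpposite.op (hA P) * MulOpposite.op (eA P)) • v := (mul_smul _ _ _).symm
        _ = (MulOpposite.op (eA P * hA P)) • v := by rw [← MulOpposite.op_mul]
        _ = (MulOpposite.op (hA P * eA P)) • v - (MulOpposite.op (2 * eA P)) • v := by
              rw [hsub, MulOpposite.op_sub, sub_smul]
        _ = MulOpposite.op (eA P) • (MulOpposite.op (hA P) • v)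
              - MulOpposite.op (eA P) • (MulOpposite.op (2 : AP P) • v) := by
              rw [MulOpposite.op_mul, MulOpposite.op_mul, mul_smul, mul_smul]
        _ = mu • (MulOpposite.op (eA P) • v) - (2 : ℂ) • (MulOpposite.op (eA P) • v) := by
              rw [hH'v, two_smul'', smul_comm (MulOpposite.op (eA P)) mu v, smul_comm (MulOpposite.op (eA P)) (2:ℂ) v]
        _ = (mu - 2) • (MulOpposite.op (eA P) • v) := by rw [sub_smul]
    have hgeig : g.HasEigenvalue (mu - 2) := by
      refine Module.End.hasEigenvalue_of_hasEigenvector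
        (x := (⟨MulOpposite.op (eA P) • v, hwU⟩ : U)) ⟨?_, ?_⟩
      · rw [Module.End.mem_eigenspace_iff]
        apply Subtype.ext
        rw [hgdef]
        rw [LinearMap.restrict_coe_apply]
        exact heig'
      · simpa [Submodule.mk_eq_zero] using hne
    have := hmuMin _ hgeig
    simp only [Complex.sub_re, Complex.re_ofNat] at this
    linarith
  -- the form kills nothing nonzero
  have hBzero : ∀ x : V, B x 0 = 0 := by
    intro x
    have h0 : B 0 x = 0 := by
      have := hsmul 0 0 x
      simpa using this
    rw [hconj, h0]
    simp
  have hFv : fA P • v = 0 := by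
    by_contra hne
    have hin : MulOpposite.op (eA P) • (fA P • v) = 0 := by
      rw [← smul_comm (fA P) (MulOpposite.op (eA P)) v, hE'v, smul_zero]
    have h30 : B (fA P • v) (fA P • v) = 0 := by
      rw [h3, hin, hBzero, neg_zero]
    obtain ⟨r, hr, hBr⟩ := hpos _ hne
    rw [h30] at hBr
    exact hr.ne' (by exact_mod_cast hBr.symm)
  have hF'v : MulOpposite.op (fA P) • v = 0 := by
    by_contra hne
    have hin : eA P • (MulOpposite.op (fA P) • v) = 0 := by
      rw [smul_comm (eA P) (MulOpposite.op (fA P)) v, hEv, smul_zero]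
    have h60 : B (MulOpposite.op (fA P) • v) (MulOpposite.op (fA P) • v) = 0 := by
      rw [h6, hin, hBzero, neg_zero]
    obtain ⟨r, hr, hBr⟩ := hpos _ hne
    rw [h60] at hBr
    exact hr.ne' (by exact_mod_cast hBr.symm)
  -- the span of v is a sub-bimodule
  set W0 : Submodule ℂ V := Submodule.span ℂ {v} with hW0def
  have hvW0 : v ∈ W0 := Submodule.mem_span_singleton_self v
  have hact : ∀ a : AP P, a • v ∈ W0 := by
    intro a
    obtain ⟨x, rfl⟩ := RingQuot.mkAlgHom_surjective ℂ (ARel P) a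
    induction x using FreeAlgebra.induction with
    | grade0 r =>
        rw [AlgHom.commutes, algebraMap_smul]
        exact Submodule.smul_mem _ r hvW0
    | grade1 i =>
        fin_cases i
        · show eA P • v ∈ W0
          rw [hEv]; exact zero_mem _
        · show fA P • v ∈ W0
          rw [hFv]; exact zero_mem _
        · show hA P • v ∈ W0
          rw [hHv]; exact Submodule.smul_mem _ _ hvW0
    | mul a b ha hb =>
        rw [map_mul, mul_smul]
        obtain ⟨c, hc⟩ := Submodule.mem_span_singleton.mp hb
        rw [← hc, smul_comm]
        exact Submodule.smul_mem _ _ ha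
    | add a b ha hb =>
        rw [map_add, add_smul]
        exact Submodule.add_mem _ ha hb
  have hact' : ∀ a : AP P, MulOpposite.op a • v ∈ W0 := by
    intro a
    obtain ⟨x, rfl⟩ := RingQuot.mkAlgHom_surjective ℂ (ARel P) a
    induction x using FreeAlgebra.induction with
    | grade0 r =>
        rw [AlgHom.commutes, ← MulOpposite.algebraMap_apply, algebraMap_smul]
        exact Submodule.smul_mem _ r hvW0
    | grade1 i =>
        fin_cases i
        · show MulOpposite.op (eA P) • v ∈ W0
          rw [hE'v]; exact zero_mem _
        · show MulOpposite.op (fA P) • v ∈ W0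
          rw [hF'v]; exact zero_mem _
        · show MulOpposite.op (hA P) • v ∈ W0
          rw [hH'v]; exact Submodule.smul_mem _ _ hvW0
    | mul a b ha hb =>
        rw [map_mul, MulOpposite.op_mul, mul_smul]
        obtain ⟨c, hc⟩ := Submodule.mem_span_singleton.mp ha
        rw [← hc, smul_comm]
        exact Submodule.smul_mem _ _ hb
    | add a b ha hb =>
        rw [map_add, MulOpposite.op_add, add_smul]
        exact Submodule.add_mem _ ha hb
  have hcl1 : ∀ a : AP P, ∀ w ∈ W0, a • w ∈ W0 := by
    intro a w hw
    obtain ⟨c, hc⟩ := Submodule.mem_span_singleton.mp hw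
    rw [← hc, smul_comm]
    exact Submodule.smul_mem _ _ (hact a)
  have hcl2 : ∀ a : AP P, ∀ w ∈ W0, MulOpposite.op a • w ∈ W0 := by
    intro a w hw
    obtain ⟨c, hc⟩ := Submodule.mem_span_singleton.mp hw
    rw [← hc, smul_comm]
    exact Submodule.smul_mem _ _ (hact' a)
  have htop : W0 = ⊤ := by
    refine (hsimple W0 hcl1 hcl2).resolve_left ?_
    intro hbot
    exact hv0 (by simpa [hbot] using hvW0)
  have hfr : Module.finrank ℂ V = 1 := by
    rw [← finrank_top ℂ V, ← htop]
    exact finrank_span_singleton hv0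
  have hall : ∀ w : V, ∃ c : ℂ, w = c • v := by
    intro w
    have hw : w ∈ W0 := htop ▸ Submodule.mem_top
    obtain ⟨c, hc⟩ := Submodule.mem_span_singleton.mp hw
    exact ⟨c, hc.symm⟩
  -- mu = - conj lam
  obtain ⟨r, hr, hBvv⟩ := hpos v hv0
  have hrne : (r : ℂ) ≠ 0 := by exact_mod_cast hr.ne'
  have hmueq : mu = -(starRingEnd ℂ lam) := by
    have h := h2 v v
    rw [hHv, hH'v, hsmul, hconj v (mu • v), hsmul, hBvv, map_mul, Complex.conj_ofReal] at h
    have hlm : lam = -(starRingEnd ℂ mu) := by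
      have h' : lam * r = -(starRingEnd ℂ mu) * r := by rw [h]; ring
      exact mul_right_cancel₀ hrne h'
    rw [hlm]
    simp
  -- P(lam+1)=0
  have hev1 : Polynomial.eval (lam + 1) P = 0 := by
    have h0 : (Polynomial.aeval (hA P + 1) P) • v = 0 := by
      rw [← relFE, mul_smul, hEv, smul_zero]
    have hLsum : L (hA P + 1) = HH + 1 := by rw [map_add, map_one, hHHdef]
    have h1' : (Polynomial.aeval (HH + 1) P) v = 0 := by
      have hLa := Polynomial.aeval_algHom_apply L (hA P + 1) P
      calc (Polynomial.aeval (HH + 1) P) v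
          = (L (Polynomial.aeval (hA P + 1) P)) v := by rw [← hLsum, hLa]
        _ = (Polynomial.aeval (hA P + 1) P) • v := rfl
        _ = 0 := h0
    have hev : (HH + 1).HasEigenvector (lam + 1) v := by
      refine ⟨Module.End.mem_eigenspace_iff.mpr ?_, hv0⟩
      show hA P • v + v = (lam + 1) • v
      rw [hHv, add_smul, one_smul]
    rw [Module.End.aeval_apply_of_hasEigenvector hev] at h1'
    rcases smul_eq_zero.mp h1' with h | h
    · exact h
    · exact absurd h hv0
  have hev2 : Polynomial.eval (lam - 1) P = 0 := by
    have h0 : (Polynomial.aeval (hA P - 1) P) • v = 0 := by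
      rw [← relEF, mul_smul, hFv, smul_zero]
    have hLsum : L (hA P - 1) = HH - 1 := by rw [map_sub, map_one, hHHdef]
    have h1' : (Polynomial.aeval (HH - 1) P) v = 0 := by
      have hLa := Polynomial.aeval_algHom_apply L (hA P - 1) P
      calc (Polynomial.aeval (HH - 1) P) v
          = (L (Polynomial.aeval (hA P - 1) P)) v := by rw [← hLsum, hLa]
        _ = (Polynomial.aeval (hA P - 1) P) • v := rfl
        _ = 0 := h0
    have hev : (HH - 1).HasEigenvector (lam - 1) v := by
      refine ⟨Module.End.mem_eigenspace_iff.mpr ?_, hv0⟩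
      show hA P • v - v = (lam - 1) • v
      rw [hHv, sub_smul, one_smul]
    rw [Module.End.aeval_apply_of_hasEigenvector hev] at h1'
    rcases smul_eq_zero.mp h1' with h | h
    · exact h
    · exact absurd h hv0
  refine ⟨hfr, lam, ?_, hev1, hev2⟩
  intro w
  obtain ⟨c, rfl⟩ := hall w
  constructor
  · rw [smul_comm, hHv, smul_smul, mul_comm c lam, ← smul_smul]
  · rw [smul_comm, hH'v, smul_smul, mul_comm c mu, ← smul_smul, hmueq]


end
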